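/- Let {ε_n}_{n≥0} be a sequence of complex numbers and C < ∞ a constant such that for all n, C⁻¹ ≤ Im ε_n and |ε_n| ≤ C, and such that Σ_n |ε_{n+1} − ε_n|² ≤ C. Then there is a constant C₁ < ∞, depending only on C, such that for all k ≤ l, |Σ_{n=k}^{l} (ε_{n+1} − ε_n)/ε_n| < C₁. -/

import Mathlib

open Complex Finset
open scoped Real

/-!
Write `u n = (ε (n + 1) - ε n) / ε n`. Since all `ε n` lie in the upper half-plane,
`log (1 + u n) = log (ε (n + 1)) - log (ε n)`, so the sum of the `log (1 + u n)` telescopes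
and is bounded by twice a bound for `log` on the region `C⁻¹ ≤ ‖z‖ ≤ C`. The remaining error
`u n - log (1 + u n)` is `O(‖u n‖ ^ 2) = O(‖ε (n + 1) - ε n‖ ^ 2)`, which is summable by hypothesis.
-/

namespace Complex

lemma log_div_of_im_pos {z w : ℂ} (hz : 0 < z.im) (hw : 0 < w.im) :
    log (w / z) = log w - log z := by
  have hw0 : w ≠ 0 := fun h => by simp [h] at hw
  have hz0 : z ≠ 0 := fun h => by simp [h] at hz
  have hargw : 0 ≤ w.arg := arg_nonneg_iff.2 hw.le
  have hargz : z.arg < π := arg_lt_pi_iff.2 (Or.inr hz.ne')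
  rw [← exp_log hw0, ← exp_log hz0, ← exp_sub, log_exp] <;>
    simp only [exp_log hw0, exp_log hz0, sub_im, log_im]
  · linarith
  · linarith [arg_le_pi w, arg_nonneg_iff.2 hz.le]

lemma norm_log_le_of_inv_le_norm_le {C : ℝ} (hC : 0 < C) {z : ℂ} (h₁ : C⁻¹ ≤ ‖z‖)
    (h₂ : ‖z‖ ≤ C) : ‖log z‖ ≤ Real.log C + π := by
  have hlog : |Real.log ‖z‖| ≤ Real.log C := by
    refine abs_le.2 ⟨?_, Real.log_le_log ((inv_pos.2 hC).trans_le h₁) h₂⟩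
    simpa only [Real.log_inv, neg_le] using Real.log_le_log (inv_pos.2 hC) h₁
  calc ‖log z‖ ≤ |(log z).re| + |(log z).im| := norm_le_abs_re_add_abs_im _
    _ ≤ Real.log C + π := by
      rw [log_re, log_im]
      exact add_le_add hlog (abs_arg_le_pi z)

lemma norm_sub_log_one_add_le {u : ℂ} {M : ℝ} (hM : ‖log (1 + u)‖ ≤ M) :
    ‖u - log (1 + u)‖ ≤ (2 + 4 * M) * ‖u‖ ^ 2 := by
  have hM0 : 0 ≤ M := (norm_nonneg _).trans hM
  rcases le_or_gt ‖u‖ (1 / 2) with hsmall | hbig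
  · have hinv : (1 - ‖u‖)⁻¹ ≤ 2 := by
      rw [inv_le_comm₀ (by linarith) two_pos]
      linarith
    calc ‖u - log (1 + u)‖ = ‖log (1 + u) - u‖ := norm_sub_rev _ _
      _ ≤ ‖u‖ ^ 2 * (1 - ‖u‖)⁻¹ / 2 := norm_log_one_add_sub_self_le (by linarith)
      _ ≤ ‖u‖ ^ 2 * 2 / 2 := by gcongr
      _ ≤ (2 + 4 * M) * ‖u‖ ^ 2 := by nlinarith [sq_nonneg ‖u‖]
  · -- once `‖u‖ > 1 / 2`, both `‖u‖` and the constant `M` are dominated by `‖u‖ ^ 2`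
    calc ‖u - log (1 + u)‖ ≤ ‖u‖ + M := norm_sub_le_of_le le_rfl hM
      _ ≤ (2 + 4 * M) * ‖u‖ ^ 2 := by
        have hu2 : 1 / 4 ≤ ‖u‖ ^ 2 := by nlinarith
        nlinarith [mul_le_mul_of_nonneg_left hu2 hM0]

lemma norm_div_sub_log_sub_log_le {C : ℝ} (hC : 0 < C) {z w : ℂ} (hz : C⁻¹ ≤ z.im)
    (hw : C⁻¹ ≤ w.im) (hzC : ‖z‖ ≤ C) (hwC : ‖w‖ ≤ C) :
    ‖(w - z) / z - (log w - log z)‖ ≤ (2 + 8 * (Real.log C + π)) * C ^ 2 * ‖w - z‖ ^ 2 := by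
  have hCinv : 0 < C⁻¹ := inv_pos.2 hC
  have hzn : C⁻¹ ≤ ‖z‖ := hz.trans (im_le_norm z)
  have hz0 : z ≠ 0 := norm_pos_iff.1 (hCinv.trans_le hzn)
  have hone_add : 1 + (w - z) / z = w / z := by field_simp; ring
  have hlog : log (1 + (w - z) / z) = log w - log z := by
    rw [hone_add, log_div_of_im_pos (hCinv.trans_le hz) (hCinv.trans_le hw)]
  have hlog_bound : ‖log (1 + (w - z) / z)‖ ≤ 2 * (Real.log C + π) := by
    rw [hlog, two_mul]
    exact norm_sub_le_of_le (norm_log_le_of_inv_le_norm_le hC (hw.trans (im_le_norm w)) hwC)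
      (norm_log_le_of_inv_le_norm_le hC hzn hzC)
  have hu : ‖(w - z) / z‖ ≤ C * ‖w - z‖ := by
    rw [norm_div, div_le_iff₀ (hCinv.trans_le hzn), mul_comm C, mul_assoc]
    exact le_mul_of_one_le_right (norm_nonneg _) ((inv_le_iff_one_le_mul₀' hC).1 hzn)
  have hL : 0 ≤ 2 + 4 * (2 * (Real.log C + π)) := by
    linarith [(norm_nonneg _).trans hlog_bound]
  calc ‖(w - z) / z - (log w - log z)‖ ≤ (2 + 4 * (2 * (Real.log C + π))) * ‖(w - z) / z‖ ^ 2 := by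
        rw [← hlog]
        exact norm_sub_log_one_add_le hlog_bound
    _ ≤ (2 + 4 * (2 * (Real.log C + π))) * (C * ‖w - z‖) ^ 2 := by gcongr
    _ = (2 + 8 * (Real.log C + π)) * C ^ 2 * ‖w - z‖ ^ 2 := by ring

end Complex

lemma norm_sum_Icc_le_of_norm_sub_sub_le {E : Type*} [SeminormedAddCommGroup E] {a F : ℕ → E}
    {b : ℕ → ℝ} {A : ℝ} (hF : ∀ n, ‖F n‖ ≤ A) (hab : ∀ n, ‖a n - (F (n + 1) - F n)‖ ≤ b n)
    (hb : Summable b) {k l : ℕ} (hkl : k ≤ l) :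
    ‖∑ n ∈ Icc k l, a n‖ ≤ 2 * A + ∑' n, b n := by
  have hsplit : ∑ n ∈ Icc k l, a n
      = (F (l + 1) - F k) + ∑ n ∈ Icc k l, (a n - (F (n + 1) - F n)) := by
    rw [← sum_Icc_sub hkl, ← sum_add_distrib]
    exact sum_congr rfl fun n _ => by abel
  have hb0 : ∀ n, 0 ≤ b n := fun n => (norm_nonneg _).trans (hab n)
  calc ‖∑ n ∈ Icc k l, a n‖
      ≤ ‖F (l + 1) - F k‖ + ∑ n ∈ Icc k l, ‖a n - (F (n + 1) - F n)‖ := by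
        rw [hsplit]
        exact norm_add_le_of_le le_rfl (norm_sum_le _ _)
    _ ≤ 2 * A + ∑ n ∈ Icc k l, b n := by
        rw [two_mul]
        exact add_le_add (norm_sub_le_of_le (hF _) (hF _)) (sum_le_sum fun n _ => hab n)
    _ ≤ 2 * A + ∑' n, b n := by gcongr; exact hb.sum_le_tsum _ fun n _ => hb0 n

theorem sum_ratio_increments_bounded (C : ℝ) (hC : 0 < C) :
    ∃ C₁ : ℝ, ∀ ε : ℕ → ℂ,
      (∀ n, C⁻¹ ≤ (ε n).im) →
      (∀ n, ‖ε n‖ ≤ C) →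
      (∑' n : ℕ, ‖ε (n + 1) - ε n‖ ^ 2) ≤ C →
      Summable (fun n => ‖ε (n + 1) - ε n‖ ^ 2) →
      ∀ k l : ℕ, k ≤ l →
        ‖∑ n ∈ Finset.Icc k l, (ε (n + 1) - ε n) / ε n‖ < C₁ := by
  set L := Real.log C + π
  set K := (2 + 8 * L) * C ^ 2
  refine ⟨2 * L + K * C + 1, fun ε him habs htsum hsumm k l hkl => ?_⟩
  have hlog : ∀ n, ‖log (ε n)‖ ≤ L := fun n =>
    norm_log_le_of_inv_le_norm_le hC ((him n).trans (im_le_norm _)) (habs n)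
  have hK : 0 ≤ K := by
    have := (norm_nonneg _).trans (hlog 0)
    positivity
  have hbound := norm_sum_Icc_le_of_norm_sub_sub_le hlog
    (fun n => norm_div_sub_log_sub_log_le hC (him n) (him (n + 1)) (habs n) (habs (n + 1)))
    (hsumm.mul_left K) hkl
  rw [tsum_mul_left] at hbound
  calc _ ≤ 2 * L + K * ∑' n, ‖ε (n + 1) - ε n‖ ^ 2 := hbound
    _ ≤ 2 * L + K * C := by gcongr
    _ < 2 * L + K * C + 1 := lt_add_one _
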